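/- arXiv:2502.01133 — 3 statements merged into one kernel-verified Lean document; each statement's English description precedes it below -/
import Mathlib

section
/- Let R be a commutative ring and θ₁, θ₂ an R-regular sequence. Suppose f₁, f₂ ∈ R with f₁ a non-zero-divisor, and r₁, r₂ ∈ R satisfy θ₁ f₂ = f₁ r₁ and θ₂ f₂ = f₁ r₂. Then there exists r ∈ R with r₁ = r θ₁ and f₂ = r f₁. -/
/-- If θ₁, θ₂ is a regular sequence, f₁ a non-zero-divisor, and
θ₁ f₂ = f₁ r₁, θ₂ f₂ = f₁ r₂, then r₁ = r θ₁ and f₂ = r f₁ for some r. -/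
theorem stmt1 (R : Type*) [CommRing R] (θ₁ θ₂ f₁ f₂ r₁ r₂ : R)
    (hθ₁ : θ₁ ∈ nonZeroDivisors R)
    (hθ₂ : ∀ r : R, θ₂ * r ∈ Ideal.span {θ₁} → r ∈ Ideal.span {θ₁})
    (hf₁ : f₁ ∈ nonZeroDivisors R)
    (h1 : θ₁ * f₂ = f₁ * r₁) (h2 : θ₂ * f₂ = f₁ * r₂) :
    ∃ r : R, r₁ = r * θ₁ ∧ f₂ = r * f₁ := by
  have key : θ₂ * r₁ = θ₁ * r₂ := by
    have h : f₁ * (θ₂ * r₁) = f₁ * (θ₁ * r₂) := by linear_combination θ₁ * h2 - θ₂ * h1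
    exact (mul_cancel_left_mem_nonZeroDivisors hf₁).mp h
  have hmem : r₁ ∈ Ideal.span ({θ₁} : Set R) := by
    apply hθ₂
    rw [Ideal.mem_span_singleton]
    exact ⟨r₂, key⟩
  obtain ⟨r, hr⟩ := Ideal.mem_span_singleton.mp hmem
  refine ⟨r, by rw [hr, mul_comm], ?_⟩
  have : θ₁ * f₂ = θ₁ * (r * f₁) := by rw [h1, hr]; ring
  exact mul_cancel_left_mem_nonZeroDivisors hθ₁ |>.mp this
end

section
/- Let R be a commutative ring and I an ideal of R containing a non-zero-divisor. Then the trace ideal of I equals I · I⁻¹, where I⁻¹ = {x ∈ Q(R) : xI ⊆ R} and Q(R) is the total ring of fractions. More precisely, tr_R(I) is the ideal of R consisting of all finite sums Σ xᵢ aᵢ with xᵢ ∈ I⁻¹ and aᵢ ∈ I. -/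
/-- The trace ideal of a module. -/
noncomputable def traceIdeal (R M : Type*) [CommRing R] [AddCommGroup M] [Module R M] :
    Ideal R :=
  ⨆ φ : M →ₗ[R] R, LinearMap.range φ

/-!
Every `φ : I →ₗ[R] R` satisfies `a φ(b) = b φ(a)`, so for a non-zero-divisor `f ∈ I` it is
multiplication by `x = φ(f)/f ∈ I⁻¹`; conversely each `x ∈ I⁻¹` defines such a `φ` since
`R → Q(R)` is injective. Thus `Hom_R(I, R) = I⁻¹` and `tr_R(I) = Σ_φ φ(I) = I⁻¹ I`.
-/

namespace Ideal

variable {R : Type*} [CommRing R] {I : Ideal R}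

theorem mul_linearMap_apply_comm (φ : I →ₗ[R] R) (a b : I) : (a : R) * φ b = b * φ a := by
  rw [← smul_eq_mul, ← map_smul, ← smul_eq_mul (b : R), ← map_smul]
  congr 1
  ext
  exact mul_comm _ _

variable {K : Type*} [CommRing K] [Algebra R K]

theorem exists_mul_algebraMap_eq_linearMap_apply (φ : I →ₗ[R] R) {f : I}
    (hf : IsUnit (algebraMap R K f)) :
    ∃ x : K, ∀ a : I, x * algebraMap R K a = algebraMap R K (φ a) := by
  refine ⟨hf.unit⁻¹ * algebraMap R K (φ f), fun a => ?_⟩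
  apply hf.mul_left_cancel
  calc algebraMap R K f * (hf.unit⁻¹ * algebraMap R K (φ f) * algebraMap R K a)
      = algebraMap R K (a * φ f) := by rw [map_mul, ← mul_assoc, ← mul_assoc,
          IsUnit.mul_val_inv, one_mul, mul_comm]
    _ = algebraMap R K f * algebraMap R K (φ a) := by
          rw [← mul_linearMap_apply_comm, map_mul]

noncomputable def mulLinearMap (hinj : Function.Injective (algebraMap R K)) (x : K)
    (hx : ∀ a ∈ I, ∃ s : R, x * algebraMap R K a = algebraMap R K s) : I →ₗ[R] R where
  toFun a := (hx a a.2).choose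
  map_add' a b := hinj <| by
    rw [map_add, ← (hx _ (a + b).2).choose_spec, ← (hx _ a.2).choose_spec,
      ← (hx _ b.2).choose_spec, Submodule.coe_add, map_add, mul_add]
  map_smul' m a := hinj <| by
    rw [RingHom.id_apply, smul_eq_mul, map_mul, ← (hx _ (m • a).2).choose_spec,
      ← (hx _ a.2).choose_spec, SetLike.val_smul, smul_eq_mul, map_mul, mul_left_comm]

theorem algebraMap_mulLinearMap_apply (hinj : Function.Injective (algebraMap R K)) (x : K)
    (hx : ∀ a ∈ I, ∃ s : R, x * algebraMap R K a = algebraMap R K s) (a : I) :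
    algebraMap R K (mulLinearMap hinj x hx a) = x * algebraMap R K a :=
  (hx a a.2).choose_spec.symm

theorem traceIdeal_eq_comap_span_inv_mul [IsFractionRing R K] {f : R} (hfI : f ∈ I)
    (hf : f ∈ nonZeroDivisors R) :
    traceIdeal R I = (Submodule.span R {y : K | ∃ x : K,
        (∀ a ∈ I, ∃ s : R, x * algebraMap R K a = algebraMap R K s) ∧
          ∃ a ∈ I, y = x * algebraMap R K a}).comap (Algebra.linearMap R K) := by
  have hinj : Function.Injective (algebraMap R K) := IsFractionRing.injective R K
  apply le_antisymm
  · refine iSup_le fun φ => ?_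
    rintro _ ⟨b, rfl⟩
    obtain ⟨x, hx⟩ := exists_mul_algebraMap_eq_linearMap_apply (K := K) φ (f := ⟨f, hfI⟩)
      (IsLocalization.map_units K ⟨f, hf⟩)
    exact Submodule.subset_span
      ⟨x, fun a ha => ⟨φ ⟨a, ha⟩, hx ⟨a, ha⟩⟩, b, b.2, (hx b).symm⟩
  · refine (Submodule.comap_mono (Submodule.span_le.mpr ?_)).trans
      (Submodule.comap_map_eq_of_injective (f := Algebra.linearMap R K) hinj _).le
    rintro _ ⟨x, hx, a, ha, rfl⟩
    refine ⟨mulLinearMap hinj x hx ⟨a, ha⟩, ?_, algebraMap_mulLinearMap_apply hinj x hx _⟩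
    exact le_iSup (fun ψ : I →ₗ[R] R => LinearMap.range ψ) _ ⟨⟨a, ha⟩, rfl⟩

end Ideal

/-- for an ideal I containing a non-zero-divisor, tr_R(I) = I·I⁻¹,
where I⁻¹ = {x ∈ Q(R) : xI ⊆ R} inside the total ring of fractions Q(R):
an element r ∈ R lies in tr_R(I) iff its image in Q(R) is a finite sum of
products x·a with x ∈ I⁻¹ and a ∈ I. -/
theorem stmt4 (R : Type*) [CommRing R] (I : Ideal R)
    (hI : ∃ f ∈ I, f ∈ nonZeroDivisors R) (r : R) :
    r ∈ traceIdeal R ↥I ↔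
      algebraMap R (Localization (nonZeroDivisors R)) r ∈
        Submodule.span R {y : Localization (nonZeroDivisors R) |
          ∃ x : Localization (nonZeroDivisors R),
            (∀ a ∈ I, ∃ s : R,
              x * algebraMap R (Localization (nonZeroDivisors R)) a =
                algebraMap R (Localization (nonZeroDivisors R)) s) ∧
            ∃ a ∈ I, y = x * algebraMap R (Localization (nonZeroDivisors R)) a} := by
  obtain ⟨f, hfI, hf⟩ := hI
  rw [Ideal.traceIdeal_eq_comap_span_inv_mul (K := Localization (nonZeroDivisors R)) hfI hf]
  rfl
end

section
/- Let R be a positively graded Noetherian domain with R_0 a field, possessing a non-zero-divisor z of degree 1, and let I be a graded ideal of R generated by a subset of R_1 with tr_R(ω_R) ⊇ I. Then for every integer k > 0, the Veronese subalgebra R^(k) satisfies tr_{R^(k)}(ω_{R^(k)}) ⊇ (n_R^{k−1} I)^(k), where n_R is the ideal generated by R_1 and (−)^(k) denotes the k-th Veronese submodule. -/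
/-- The k-th Veronese subalgebra R^(k) = ⊕_{i≥0} R_{ik}, realized as the subring
of R generated by the homogeneous components of degrees divisible by k. -/
def veronese (R : Type*) [CommRing R] (𝒜 : ℕ → AddSubgroup R) (k : ℕ) : Subring R :=
  Subring.closure (⋃ i : ℕ, (𝒜 (i * k) : Set R))

/-- The k-th Veronese submodule ω^(k) = ⊕_i ω_{ik} of a ℤ-graded module ω,
as a module over the Veronese subalgebra R^(k). -/
def veroneseSubmodule (R : Type*) [CommRing R] (𝒜 : ℕ → AddSubgroup R) (k : ℕ)
    (ω : Type*) [AddCommGroup ω] [Module R ω] (𝒲 : ℤ → AddSubgroup ω) :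
    Submodule (veronese R 𝒜 k) ω :=
  Submodule.span (veronese R 𝒜 k) (⋃ i : ℤ, (𝒲 (i * (k : ℤ)) : Set ω))

/-!
The projection `π : R → R^(k)` onto the components of degree divisible by `k` is
`R^(k)`-linear, so for every `φ : ω →ₗ[R] R` the map `m ↦ π (φ m)` on `ω^(k)` lands in
`R^(k)`, and its values lie in `tr(ω^(k))`. Given a homogeneous `w ∈ ω_j` and a product
`c` of `k - 1` linear forms, split off a factor `c₁` of `c` of degree `t < k` with
`j + t ≡ 0 (mod k)`; then `c₁ w ∈ ω^(k)` and `π (c φ w) = π ((c₂ • φ) (c₁ w))` is such a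
value. Hence `π (c x) ∈ tr(ω^(k))` for `x ∈ tr(ω) ⊇ I`, and for `x ∈ R₁` we have
`π (c x) = c x`. Finally an element of `R^(k)` in the ideal of `R` generated by these
degree-`k` elements `c x` is, after applying `π`, in the ideal of `R^(k)` they generate.
-/

open Pointwise

section VeroneseProjection

variable {R : Type*} [CommRing R]

theorem mem_veronese_of_mem {𝒜 : ℕ → AddSubgroup R} {k i : ℕ} {x : R} (hx : x ∈ 𝒜 (i * k)) :
    x ∈ veronese R 𝒜 k :=
  Subring.subset_closure (Set.mem_iUnion.2 ⟨i, hx⟩)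

variable (𝒜 : ℕ → AddSubgroup R) [GradedRing 𝒜] (k : ℕ)

theorem graded_pow_subset (i m : ℕ) : (𝒜 i : Set R) ^ m ⊆ 𝒜 (m * i) := by
  induction m with
  | zero =>
    rintro _ rfl
    simpa using SetLike.one_mem_graded 𝒜
  | succ n ih =>
    rintro _ ⟨a, ha, b, hb, rfl⟩
    simpa [add_mul] using SetLike.mul_mem_graded (ih ha) hb

noncomputable def degreeDvdProj : R →+ R :=
  (DirectSum.toAddMonoid fun n => if k ∣ n then (𝒜 n).subtype else 0).comp
    (DirectSum.decomposeAddEquiv 𝒜).toAddMonoidHom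

variable {𝒜}

theorem degreeDvdProj_of_mem {x : R} {n : ℕ} (hx : x ∈ 𝒜 n) :
    degreeDvdProj 𝒜 k x = if k ∣ n then x else 0 := by
  by_cases h : k ∣ n <;>
    simp [degreeDvdProj, DirectSum.decomposeAddEquiv, DirectSum.decompose_of_mem 𝒜 hx,
      DirectSum.toAddMonoid_of, h]

theorem degreeDvdProj_mem_veronese (r : R) : degreeDvdProj 𝒜 k r ∈ veronese R 𝒜 k := by
  induction r using DirectSum.Decomposition.inductionOn 𝒜 with
  | zero => simp only [map_zero, zero_mem]
  | @homogeneous n x =>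
    rw [degreeDvdProj_of_mem k x.2]
    split_ifs with h
    · obtain ⟨i, rfl⟩ := h
      exact mem_veronese_of_mem (by rw [mul_comm]; exact x.2)
    · exact (veronese R 𝒜 k).zero_mem
  | add x y hx hy => simpa only [map_add] using add_mem hx hy

theorem degreeDvdProj_mul_of_mem {s : R} {m : ℕ} (hs : s ∈ 𝒜 m) (hm : k ∣ m) (r : R) :
    degreeDvdProj 𝒜 k (s * r) = s * degreeDvdProj 𝒜 k r := by
  induction r using DirectSum.Decomposition.inductionOn 𝒜 with
  | zero => simp
  | @homogeneous n x =>
    rw [degreeDvdProj_of_mem k x.2, degreeDvdProj_of_mem k (SetLike.mul_mem_graded hs x.2),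
      mul_ite, mul_zero]
    exact if_congr (Nat.dvd_add_right hm) rfl rfl
  | add x y hx hy => rw [mul_add, map_add, map_add, hx, hy, mul_add]

theorem degreeDvdProj_mul_of_mem_veronese {s : R} (hs : s ∈ veronese R 𝒜 k) (r : R) :
    degreeDvdProj 𝒜 k (s * r) = s * degreeDvdProj 𝒜 k r := by
  induction hs using Subring.closure_induction generalizing r with
  | mem x hx =>
    obtain ⟨_, ⟨i, rfl⟩, hx⟩ := hx
    exact degreeDvdProj_mul_of_mem k hx (Dvd.intro_left i rfl) r
  | one => simp
  | zero => simp
  | add x y _ _ hx hy => rw [add_mul, map_add, hx, hy, add_mul]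
  | neg x _ hx => rw [neg_mul, map_neg, hx, neg_mul]
  | mul x y _ _ hx hy => rw [mul_assoc, hx, hy, mul_assoc]

variable (𝒜)

noncomputable def veroneseProj : R →ₗ[veronese R 𝒜 k] veronese R 𝒜 k where
  toFun r := ⟨degreeDvdProj 𝒜 k r, degreeDvdProj_mem_veronese k r⟩
  map_add' r r' := Subtype.ext (map_add _ r r')
  map_smul' s r := Subtype.ext (degreeDvdProj_mul_of_mem_veronese k s.2 r)

variable {k}

@[simp]
theorem coe_veroneseProj (r : R) : (veroneseProj 𝒜 k r : R) = degreeDvdProj 𝒜 k r :=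
  rfl

theorem veroneseProj_coe (a : veronese R 𝒜 k) : veroneseProj 𝒜 k a = a := by
  ext
  simpa [degreeDvdProj_of_mem k (SetLike.one_mem_graded 𝒜)] using
    degreeDvdProj_mul_of_mem_veronese k a.2 1

theorem comap_span_le_span_of_subset_veronese {G : Set R} (hG : G ⊆ veronese R 𝒜 k) :
    Ideal.comap (veronese R 𝒜 k).subtype (Ideal.span G)
      ≤ Ideal.span ((veronese R 𝒜 k).subtype ⁻¹' G) := by
  intro a ha
  obtain ⟨n, f, g, hfg⟩ := Submodule.mem_span_set'.1 (show (a : R) ∈ Ideal.span G from ha)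
  rw [← veroneseProj_coe 𝒜 a, ← hfg, map_sum]
  refine Ideal.sum_mem _ fun i _ => ?_
  have hproj :
      veroneseProj 𝒜 k (f i • (g i : R)) = ⟨g i, hG (g i).2⟩ * veroneseProj 𝒜 k (f i) := by
    ext
    simp only [coe_veroneseProj, smul_eq_mul, mul_comm (f i), Subring.coe_mul,
      degreeDvdProj_mul_of_mem_veronese k (hG (g i).2)]
  rw [hproj]
  exact Ideal.mul_mem_right _ _ (Ideal.subset_span (g i).2)

end VeroneseProjection

theorem exists_lt_dvd_add (j : ℤ) {k : ℕ} (hk : 0 < k) : ∃ t < k, (k : ℤ) ∣ j + t := by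
  refine ⟨((-j) % k).toNat, ?_, ?_⟩
  · have := Int.emod_lt_of_pos (-j) (Int.natCast_pos.2 hk)
    omega
  · rw [Int.toNat_of_nonneg (Int.emod_nonneg _ (by omega)), Int.emod_def]
    exact ⟨-(-j / k), by ring⟩

section Trace

variable {R : Type*} [CommRing R] {𝒜 : ℕ → AddSubgroup R} {k : ℕ}
variable {ω : Type*} [AddCommGroup ω] [Module R ω] {𝒲 : ℤ → AddSubgroup ω}

theorem mem_veroneseSubmodule_of_mem {w : ω} {j : ℤ} (hw : w ∈ 𝒲 j) (hj : (k : ℤ) ∣ j) :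
    w ∈ veroneseSubmodule R 𝒜 k ω 𝒲 := by
  obtain ⟨i, rfl⟩ := hj
  exact Submodule.subset_span (Set.mem_iUnion.2 ⟨i, by rwa [mul_comm]⟩)

variable [GradedRing 𝒜]

theorem veroneseProj_apply_mem_traceIdeal (φ : ω →ₗ[R] R) {m : ω}
    (hm : m ∈ veroneseSubmodule R 𝒜 k ω 𝒲) :
    veroneseProj 𝒜 k (φ m) ∈ traceIdeal (veronese R 𝒜 k) (veroneseSubmodule R 𝒜 k ω 𝒲) :=
  le_iSup (fun ψ => LinearMap.range ψ)
    ((veroneseProj 𝒜 k).comp ((φ.restrictScalars (veronese R 𝒜 k)).comp (Submodule.subtype _)))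
    ⟨⟨m, hm⟩, rfl⟩

variable (hsmul : ∀ (i : ℕ) (j : ℤ) (r : R) (w : ω), r ∈ 𝒜 i → w ∈ 𝒲 j → r • w ∈ 𝒲 (j + i))
  (hk : 0 < k)
include hsmul hk

theorem veroneseProj_mul_apply_mem_traceIdeal_of_mem (φ : ω →ₗ[R] R) {w : ω} {j : ℤ}
    (hw : w ∈ 𝒲 j) {c : R} (hc : c ∈ (𝒜 1 : Set R) ^ (k - 1)) :
    veroneseProj 𝒜 k (c * φ w)
      ∈ traceIdeal (veronese R 𝒜 k) (veroneseSubmodule R 𝒜 k ω 𝒲) := by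
  obtain ⟨t, htk, hdvd⟩ := exists_lt_dvd_add j hk
  rw [show k - 1 = t + (k - 1 - t) by omega, pow_add] at hc
  obtain ⟨c₁, hc₁, c₂, -, rfl⟩ := hc
  have hc₁w : c₁ • w ∈ veroneseSubmodule R 𝒜 k ω 𝒲 :=
    mem_veroneseSubmodule_of_mem (hsmul t j c₁ w (by simpa using graded_pow_subset 𝒜 1 t hc₁) hw)
      hdvd
  have hsplit : c₁ * c₂ * φ w = (c₂ • φ) (c₁ • w) := by
    simp only [LinearMap.smul_apply, map_smul, smul_eq_mul]
    ring
  rw [hsplit]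
  exact veroneseProj_apply_mem_traceIdeal _ hc₁w

theorem veroneseProj_mul_mem_traceIdeal [DirectSum.Decomposition 𝒲] {x : R}
    (hx : x ∈ traceIdeal R ω) {c : R} (hc : c ∈ (𝒜 1 : Set R) ^ (k - 1)) :
    veroneseProj 𝒜 k (c * x) ∈ traceIdeal (veronese R 𝒜 k) (veroneseSubmodule R 𝒜 k ω 𝒲) := by
  refine Submodule.iSup_induction _ (motive := fun x => veroneseProj 𝒜 k (c * x) ∈ _) hx
    ?_ (by simp) fun x y hx hy => by simpa only [mul_add, map_add] using add_mem hx hy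
  rintro φ _ ⟨w, rfl⟩
  induction w using DirectSum.Decomposition.inductionOn 𝒲 with
  | zero => simp
  | homogeneous w => exact veroneseProj_mul_apply_mem_traceIdeal_of_mem hsmul hk φ w.2 hc
  | add w w' hw hw' => simpa only [map_add, mul_add] using add_mem hw hw'

end Trace

theorem stmt17_general (R : Type*) [CommRing R]
    (𝒜 : ℕ → AddSubgroup R) [GradedRing 𝒜]
    -- ω = ω_R : the graded canonical module of R, isomorphic to a nonzero ideal
    (ω : Type*) [AddCommGroup ω] [Module R ω]
    (𝒲 : ℤ → AddSubgroup ω) [DirectSum.Decomposition 𝒲]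
    (hsmul : ∀ (i : ℕ) (j : ℤ) (r : R) (w : ω), r ∈ 𝒜 i → w ∈ 𝒲 j → r • w ∈ 𝒲 (j + i))
    (I : Ideal R) (hI : ∃ s : Set R, s ⊆ ↑(𝒜 1) ∧ Ideal.span s = I)
    (htr : I ≤ traceIdeal R ω)
    (k : ℕ) (hk : 0 < k) :
    Ideal.comap (veronese R 𝒜 k).subtype
        ((Ideal.span (𝒜 1 : Set R)) ^ (k - 1) * I)
      ≤ traceIdeal (veronese R 𝒜 k) ↥(veroneseSubmodule R 𝒜 k ω 𝒲) := by
  obtain ⟨s, hs1, rfl⟩ := hI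
  have hdeg : ∀ c ∈ (𝒜 1 : Set R) ^ (k - 1), ∀ x ∈ s, c * x ∈ 𝒜 k := fun c hc x hx => by
    simpa [Nat.sub_add_cancel hk] using
      SetLike.mul_mem_graded (graded_pow_subset 𝒜 1 (k - 1) hc) (hs1 hx)
  rw [Submodule.span_pow, Ideal.span_mul_span']
  refine (comap_span_le_span_of_subset_veronese 𝒜 ?_).trans (Ideal.span_le.2 ?_)
  · rintro _ ⟨c, hc, x, hx, rfl⟩
    exact mem_veronese_of_mem (i := 1) (by simpa using hdeg c hc x hx)
  · rintro a ⟨c, hc, x, hx, hcx⟩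
    have hproj : veroneseProj 𝒜 k (c * x) = a := by
      ext
      rw [coe_veroneseProj, degreeDvdProj_of_mem k (hdeg c hc x hx), if_pos dvd_rfl]
      exact hcx
    rw [← hproj]
    exact veroneseProj_mul_mem_traceIdeal hsmul hk (htr (Ideal.subset_span hx)) hc

/-- Lemma 2.18 of the paper: R a Noetherian positively graded domain
with R₀ a field, z ∈ R₁ a non-zero-divisor, I a graded ideal generated by a subset
of R₁ with tr_R(ω_R) ⊇ I.  Then for every k > 0,
tr_{R^(k)}(ω_{R^(k)}) ⊇ (n_R^{k−1} I)^(k), where n_R is the ideal generated by R₁.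
Here ω is the graded canonical module of R (an abstract graded R-module, which for
a domain is isomorphic to a nonzero ideal of R), and—using the known isomorphism
ω_{R^(k)} ≅ (ω_R)^(k)—the canonical module of R^(k) is the Veronese submodule
ω^(k); the Veronese piece (n_R^{k−1} I)^(k) is the contraction of n_R^{k−1}·I to
the subring R^(k). -/
theorem stmt17 (R : Type*) [CommRing R] [IsDomain R] [IsNoetherianRing R]
    (𝒜 : ℕ → AddSubgroup R) [GradedRing 𝒜]
    (hfield : ∀ x ∈ 𝒜 0, x ≠ 0 → ∃ y ∈ 𝒜 0, x * y = 1)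
    (z : R) (hz1 : z ∈ 𝒜 1) (hz : z ∈ nonZeroDivisors R)
    -- ω = ω_R : the graded canonical module of R, isomorphic to a nonzero ideal
    (ω : Type*) [AddCommGroup ω] [Module R ω] [Module.Finite R ω]
    (𝒲 : ℤ → AddSubgroup ω) [DirectSum.Decomposition 𝒲]
    (hsmul : ∀ (i : ℕ) (j : ℤ) (r : R) (w : ω), r ∈ 𝒜 i → w ∈ 𝒲 j → r • w ∈ 𝒲 (j + i))
    (hcan : ∃ J : Ideal R, J ≠ ⊥ ∧ Nonempty (ω ≃ₗ[R] ↥J))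
    (I : Ideal R) (hI : ∃ s : Set R, s ⊆ ↑(𝒜 1) ∧ Ideal.span s = I)
    (htr : I ≤ traceIdeal R ω)
    (k : ℕ) (hk : 0 < k) :
    Ideal.comap (veronese R 𝒜 k).subtype
        ((Ideal.span (𝒜 1 : Set R)) ^ (k - 1) * I)
      ≤ traceIdeal (veronese R 𝒜 k) ↥(veroneseSubmodule R 𝒜 k ω 𝒲) :=
  stmt17_general R 𝒜 ω 𝒲 hsmul I hI htr k hk
end
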